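/- arXiv:0902.1717 — 2 statements merged into one kernel-verified Lean document; each statement's English description precedes it below -/
import Mathlib

section
/- Let f ∈ L¹(ℝ) be nonnegative, vanish on the negative half-line, and crest once at the point b ≥ 0 (i.e. f is monotone increasing on [0, b] and monotone decreasing on [b, ∞)). Then for every z > 0, |f̂(z)| ≤ (π/2)·√10 · ∫_{b−1/z}^{b+1/z} f(x) dx. -/
open MeasureTheory Real Set

/-- The Fourier transform on the line: `f̂(z) = ∫ f(x) e^{-ixz} dx`. -/
noncomputable def fourierTransform (f : ℝ → ℝ) (z : ℝ) : ℂ :=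
  ∫ x : ℝ, (f x : ℂ) * Complex.exp (-(x * z) * Complex.I)

/-- The decreasing rearrangement `f*(x) = inf {α > 0 : |{t : |f t| > α}| ≤ x}`. -/
noncomputable def decreasingRearrangement (f : ℝ → ℝ) (x : ℝ) : ℝ :=
  sInf {α : ℝ | 0 < α ∧ volume {t : ℝ | α < |f t|} ≤ ENNReal.ofReal x}

/-- A nonnegative function crests once: increasing up to some `b`, decreasing afterwards. -/
def CrestsOnce (f : ℝ → ℝ) : Prop :=
  ∃ b : ℝ, MonotoneOn f (Set.Iic b) ∧ AntitoneOn f (Set.Ici b)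

/-- `f` can be written as a sum of `n` nonnegative functions with pairwise almost
disjoint supports, each of which crests once. -/
def HasCrestDecomp (f : ℝ → ℝ) (n : ℕ) : Prop :=
  ∃ g : Fin n → ℝ → ℝ,
    (∀ i, ∀ x, 0 ≤ g i x) ∧
    (∀ i, CrestsOnce (g i)) ∧
    (Pairwise fun i j =>
      volume (Function.support (g i) ∩ Function.support (g j)) = 0) ∧
    (∀ x, f x = ∑ i, g i x)

/-- `#crests(f) = N` : `N` is the least number of pieces in such a decomposition. -/
def CrestsEq (f : ℝ → ℝ) (N : ℕ) : Prop :=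
  HasCrestDecomp f N ∧ ∀ m : ℕ, m < N → ¬ HasCrestDecomp f m

/-!
Translating `f` by half a period `π / z` flips the sign of `f̂(z)`, so
`2 ‖f̂(z)‖ ≤ ∫ |f x - f (x + π / z)|`. As `f` rises up to `b` and falls after it, this integral
telescopes outside `[b - π / z, b + π / z]` and is at most `2 ∫_{b - π/z}^{b + π/z} f`. On each
side of the crest, the window of length `π / z ≤ 4 / z` is covered by four translates of the
window of length `1 / z` next to `b`, none of which carries more mass than that one; finally
`4 ≤ (π / 2) √10`.
-/

section Fourier

variable {f g : ℝ → ℝ}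

lemma integrable_fourierIntegrand (hf : Integrable f) (z : ℝ) :
    Integrable fun x : ℝ => (f x : ℂ) * Complex.exp (-(x * z) * Complex.I) := by
  refine hf.ofReal.mul_bdd (c := 1) (by fun_prop) (.of_forall fun x => ?_)
  rw [Complex.norm_exp]
  simp

lemma fourierTransform_sub (hf : Integrable f) (hg : Integrable g) (z : ℝ) :
    fourierTransform (fun x => f x - g x) z = fourierTransform f z - fourierTransform g z := by
  unfold fourierTransform
  rw [← integral_sub (integrable_fourierIntegrand hf z) (integrable_fourierIntegrand hg z)]
  push_cast
  simp only [sub_mul]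

lemma fourierTransform_comp_add_right (f : ℝ → ℝ) (h z : ℝ) :
    fourierTransform (fun x => f (x + h)) z =
      Complex.exp (h * z * Complex.I) * fourierTransform f z := by
  unfold fourierTransform
  rw [← integral_add_right_eq_self
      (fun x : ℝ => (f x : ℂ) * Complex.exp (-(x * z) * Complex.I)) h, ← integral_const_mul]
  congr 1 with x
  rw [mul_left_comm, ← Complex.exp_add]
  push_cast
  ring_nf

lemma norm_fourierTransform_le_integral_abs (f : ℝ → ℝ) (z : ℝ) :
    ‖fourierTransform f z‖ ≤ ∫ x, |f x| :=
  (norm_integral_le_integral_norm _).trans_eq <| by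
    congr 1 with x
    rw [norm_mul, Complex.norm_exp]
    simp

lemma norm_fourierTransform_le_integral_abs_sub_comp_add (hf : Integrable f) {z : ℝ}
    (hz : z ≠ 0) :
    ‖fourierTransform f z‖ ≤ (∫ x, |f x - f (x + π / z)|) / 2 := by
  have hflip : fourierTransform (fun x => f x - f (x + π / z)) z = 2 * fourierTransform f z := by
    rw [fourierTransform_sub hf (hf.comp_add_right _), fourierTransform_comp_add_right]
    push_cast
    rw [div_mul_cancel₀ _ (by exact_mod_cast hz), Complex.exp_pi_mul_I]
    ring
  have := norm_fourierTransform_le_integral_abs (fun x => f x - f (x + π / z)) z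
  rw [hflip, norm_mul, Complex.norm_two] at this
  linarith

end Fourier

section Translate

variable {f : ℝ → ℝ} {a h : ℝ}

lemma AntitoneOn.integral_Ioi_abs_sub_comp_add (hanti : AntitoneOn f (Ici a))
    (hf : Integrable f) (hh : 0 ≤ h) :
    ∫ x in Ioi a, |f x - f (x + h)| = ∫ x in a..a + h, f x := by
  have hshift : ∫ x in Ioi a, f (x + h) = ∫ x in Ioi (a + h), f x := by
    simpa using (measurePreserving_add_right volume h).setIntegral_preimage_emb
      (measurableEmbedding_addRight h) f (Ioi (a + h))
  calc ∫ x in Ioi a, |f x - f (x + h)| = ∫ x in Ioi a, (f x - f (x + h)) :=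
        setIntegral_congr_fun measurableSet_Ioi fun x hx => abs_of_nonneg <| sub_nonneg.2 <|
          hanti (mem_Ici.2 (le_of_lt hx)) (mem_Ici.2 (by linarith [mem_Ioi.1 hx]))
            (by linarith)
    _ = (∫ x in Ioi a, f x) - ∫ x in Ioi (a + h), f x := by
        rw [integral_sub hf.integrableOn (hf.comp_add_right h).integrableOn, hshift]
    _ = ∫ x in a..a + h, f x :=
        intervalIntegral.integral_Ioi_sub_Ioi hf.integrableOn (by linarith)

lemma MonotoneOn.integral_Iic_abs_sub_comp_add (hmono : MonotoneOn f (Iic a))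
    (hf : Integrable f) (hh : 0 ≤ h) :
    ∫ x in Iic (a - h), |f x - f (x + h)| = ∫ x in a - h..a, f x := by
  have hshift : ∫ x in Iic (a - h), f (x + h) = ∫ x in Iic a, f x := by
    simpa using (measurePreserving_add_right volume h).setIntegral_preimage_emb
      (measurableEmbedding_addRight h) f (Iic a)
  calc ∫ x in Iic (a - h), |f x - f (x + h)| = ∫ x in Iic (a - h), (f (x + h) - f x) :=
        setIntegral_congr_fun measurableSet_Iic fun x hx => by
          rw [abs_sub_comm]
          have hx' := mem_Iic.1 hx
          exact abs_of_nonneg <| sub_nonneg.2 <|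
            hmono (mem_Iic.2 (by linarith)) (mem_Iic.2 (by linarith)) (by linarith)
    _ = (∫ x in Iic a, f x) - ∫ x in Iic (a - h), f x := by
        rw [integral_sub (hf.comp_add_right h).integrableOn hf.integrableOn, hshift]
    _ = ∫ x in a - h..a, f x :=
        intervalIntegral.integral_Iic_sub_Iic hf.integrableOn hf.integrableOn

lemma intervalIntegral_abs_sub_comp_add_le (hpos : ∀ x, 0 ≤ f x) (hf : Integrable f)
    (hh : 0 ≤ h) :
    ∫ x in a - h..a, |f x - f (x + h)| ≤ ∫ x in a - h..a + h, f x := by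
  have hii : ∀ c d, IntervalIntegrable f volume c d := fun _ _ => hf.intervalIntegrable
  calc ∫ x in a - h..a, |f x - f (x + h)|
      ≤ ∫ x in a - h..a, (f x + f (x + h)) :=
        intervalIntegral.integral_mono_on (by linarith)
          ((hf.sub (hf.comp_add_right h)).abs.intervalIntegrable)
          (hf.add (hf.comp_add_right h)).intervalIntegrable fun x _ =>
            abs_sub_le_of_nonneg_of_le (hpos x) (le_add_of_nonneg_right (hpos _)) (hpos _)
              (le_add_of_nonneg_left (hpos x))
    _ = (∫ x in a - h..a, f x) + ∫ x in a..a + h, f x := by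
        rw [intervalIntegral.integral_add (hii _ _) (hf.comp_add_right h).intervalIntegrable,
          intervalIntegral.integral_comp_add_right, sub_add_cancel]
    _ = ∫ x in a - h..a + h, f x :=
        intervalIntegral.integral_add_adjacent_intervals (hii _ _) (hii _ _)

lemma integral_abs_sub_comp_add_le_of_crest (hpos : ∀ x, 0 ≤ f x) (hf : Integrable f) {b : ℝ}
    (hmono : MonotoneOn f (Iic b)) (hanti : AntitoneOn f (Ici b)) (hh : 0 ≤ h) :
    ∫ x, |f x - f (x + h)| ≤ 2 * ∫ x in b - h..b + h, f x := by
  have hd : Integrable fun x => |f x - f (x + h)| := (hf.sub (hf.comp_add_right h)).abs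
  have hii : ∀ c d, IntervalIntegrable f volume c d := fun _ _ => hf.intervalIntegrable
  rw [← intervalIntegral.integral_Iic_add_Ioi hd.integrableOn hd.integrableOn,
    ← intervalIntegral.integral_interval_add_Ioi (b := b) hd.integrableOn hd.integrableOn,
    hmono.integral_Iic_abs_sub_comp_add hf hh, hanti.integral_Ioi_abs_sub_comp_add hf hh,
    ← intervalIntegral.integral_add_adjacent_intervals (hii (b - h) b) (hii b (b + h))]
  have := intervalIntegral_abs_sub_comp_add_le (a := b) hpos hf hh
  rw [← intervalIntegral.integral_add_adjacent_intervals (hii (b - h) b) (hii b (b + h))] at this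
  linarith

end Translate

section Crest

variable {f : ℝ → ℝ} {a u : ℝ}

lemma AntitoneOn.intervalIntegral_add_nat_mul_le (hanti : AntitoneOn f (Ici a)) (hu : 0 ≤ u)
    (n : ℕ) : ∫ x in a..a + n * u, f x ≤ n * ∫ x in a..a + u, f x := by
  have hii : ∀ c d, a ≤ c → a ≤ d → IntervalIntegrable f volume c d := fun c d hc hd =>
    (hanti.mono fun x hx => le_trans (le_min hc hd) hx.1).intervalIntegrable
  induction n with
  | zero => simp
  | succ n ih =>
    have hnu : 0 ≤ (n : ℝ) * u := by positivity
    have hblock : ∫ x in a + n * u..a + u + n * u, f x ≤ ∫ x in a..a + u, f x := by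
      rw [← intervalIntegral.integral_comp_add_right]
      refine intervalIntegral.integral_mono_on (by linarith)
        ((IntervalIntegrable.comp_add_right_iff).2 (hii _ _ (by linarith) (by linarith)))
        (hii _ _ le_rfl (by linarith))
        fun x hx => hanti hx.1 (by simp only [mem_Ici]; linarith [hx.1]) (by linarith)
    rw [← intervalIntegral.integral_add_adjacent_intervals (b := a + n * u)
      (hii _ _ le_rfl (by linarith)) (hii _ _ (by linarith) (by push_cast; nlinarith))]
    rw [show a + ((n + 1 : ℕ) : ℝ) * u = a + u + n * u by push_cast; ring]
    push_cast
    linarith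

lemma AntitoneOn.intervalIntegral_add_pi_mul_le (hanti : AntitoneOn f (Ici a))
    (hpos : ∀ x, 0 ≤ f x) (hu : 0 ≤ u) :
    ∫ x in a..a + π * u, f x ≤ 4 * ∫ x in a..a + u, f x :=
  calc ∫ x in a..a + π * u, f x ≤ ∫ x in a..a + (4 : ℕ) * u, f x := by
        refine intervalIntegral.integral_mono_interval le_rfl (by nlinarith [pi_pos])
          (by push_cast; nlinarith [pi_le_four]) (.of_forall hpos)
          (hanti.mono fun x hx => ?_).intervalIntegrable
        exact (le_min le_rfl (by push_cast; linarith)).trans hx.1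
    _ ≤ 4 * ∫ x in a..a + u, f x := by exact_mod_cast hanti.intervalIntegral_add_nat_mul_le hu 4

lemma MonotoneOn.intervalIntegral_sub_pi_mul_le (hmono : MonotoneOn f (Iic a))
    (hpos : ∀ x, 0 ≤ f x) (hu : 0 ≤ u) :
    ∫ x in a - π * u..a, f x ≤ 4 * ∫ x in a - u..a, f x := by
  have hanti : AntitoneOn (fun x => f (-x)) (Ici (-a)) := fun x hx y hy hxy =>
    hmono (mem_Iic.2 (neg_le.1 hy)) (mem_Iic.2 (neg_le.1 hx)) (neg_le_neg hxy)
  have := hanti.intervalIntegral_add_pi_mul_le (fun x => hpos (-x)) hu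
  simp only [intervalIntegral.integral_comp_neg, neg_add_rev, neg_neg] at this
  simpa only [neg_add_eq_sub] using this

lemma intervalIntegral_pi_mul_le_of_crest (hpos : ∀ x, 0 ≤ f x) (hf : Integrable f) {b : ℝ}
    (hmono : MonotoneOn f (Iic b)) (hanti : AntitoneOn f (Ici b)) (hu : 0 ≤ u) :
    ∫ x in b - π * u..b + π * u, f x ≤ 4 * ∫ x in b - u..b + u, f x := by
  have hii : ∀ c d, IntervalIntegrable f volume c d := fun _ _ => hf.intervalIntegrable
  rw [← intervalIntegral.integral_add_adjacent_intervals (hii (b - π * u) b) (hii b _),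
    ← intervalIntegral.integral_add_adjacent_intervals (hii (b - u) b) (hii b _)]
  linarith [hmono.intervalIntegral_sub_pi_mul_le hpos hu,
    hanti.intervalIntegral_add_pi_mul_le hpos hu]

end Crest

theorem fourier_bound_of_one_crest_general (f : ℝ → ℝ) (hf : Integrable f)
    (hpos : ∀ x, 0 ≤ f x)
    (b : ℝ)
    (hmono : MonotoneOn f (Set.Iic b)) (hanti : AntitoneOn f (Set.Ici b)) :
    ∀ z : ℝ, 0 < z →
      ‖fourierTransform f z‖ ≤
        (π / 2) * Real.sqrt 10 * ∫ x in (b - 1/z)..(b + 1/z), f x := by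
  intro z hz
  have hu : 0 < 1 / z := one_div_pos.2 hz
  have hconst : (4 : ℝ) ≤ π / 2 * √10 := by
    nlinarith [pi_gt_three, Real.le_sqrt_of_sq_le (show (3 : ℝ) ^ 2 ≤ 10 by norm_num)]
  have hshift := integral_abs_sub_comp_add_le_of_crest hpos hf hmono hanti
    (mul_nonneg pi_pos.le hu.le)
  calc ‖fourierTransform f z‖ ≤ (∫ x, |f x - f (x + π * (1 / z))|) / 2 := by
        simpa only [div_eq_mul_one_div π z] using
          norm_fourierTransform_le_integral_abs_sub_comp_add hf hz.ne'
    _ ≤ ∫ x in b - π * (1 / z)..b + π * (1 / z), f x := by linarith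
    _ ≤ 4 * ∫ x in b - 1 / z..b + 1 / z, f x :=
        intervalIntegral_pi_mul_le_of_crest hpos hf hmono hanti hu.le
    _ ≤ π / 2 * √10 * ∫ x in b - 1 / z..b + 1 / z, f x :=
        mul_le_mul_of_nonneg_right hconst <|
          intervalIntegral.integral_nonneg (by linarith) fun x _ => hpos x

/-- Lemma: if `f ∈ L¹[0,∞)` is nonnegative and crests once at `b ≥ 0` then
`|f̂(z)| ≤ (π/2)·√10 · ∫_{b-1/z}^{b+1/z} f(x) dx` for all `z > 0`. -/
theorem fourier_bound_of_one_crest (f : ℝ → ℝ) (hf : Integrable f)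
    (hpos : ∀ x, 0 ≤ f x) (hzero : ∀ x < (0:ℝ), f x = 0)
    (b : ℝ) (hb : 0 ≤ b)
    (hmono : MonotoneOn f (Set.Iic b)) (hanti : AntitoneOn f (Set.Ici b)) :
    ∀ z : ℝ, 0 < z →
      ‖fourierTransform f z‖ ≤
        (π / 2) * Real.sqrt 10 * ∫ x in (b - 1/z)..(b + 1/z), f x :=
  fourier_bound_of_one_crest_general f hf hpos b hmono hanti
end

section
/- Let f ∈ L¹(ℝ) be nonnegative, smooth (infinitely differentiable), and suppose that f′(x) = 0 implies f″(x) ≠ 0 for every x ∈ ℝ. If Q(z) = |f̂(z)| / (π·√10 · ∫₀^{1/z} f*(x) dx) > N for some z > 0 (with N a positive integer), then the derivative f′ has at least 2N − 1 real roots. -/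
open MeasureTheory Real Set

section AuxLemmas

open Filter Topology

lemma ev_pos_right {g : ℝ → ℝ} {L q : ℝ} (hg : HasDerivAt g L q)
    (h0 : g q = 0) (hL : 0 < L) : ∀ᶠ x in 𝓝[>] q, 0 < g x := by
  have hs := hasDerivAt_iff_tendsto_slope.mp hg
  have h1 : ∀ᶠ x in 𝓝[≠] q, 0 < slope g q x := hs (Ioi_mem_nhds hL)
  have h2 : 𝓝[>] q ≤ 𝓝[≠] q := nhdsWithin_mono _ fun x hx => ne_of_gt hx
  filter_upwards [h2 h1, self_mem_nhdsWithin] with x hx hxq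
  have hslope : slope g q x = g x / (x - q) := by
    rw [slope_def_field, h0, sub_zero]
  have hxq' : (0:ℝ) < x - q := sub_pos.2 hxq
  have := hx
  rw [hslope] at this
  have := mul_pos this hxq'
  rwa [div_mul_cancel₀] at this
  exact ne_of_gt hxq'

lemma exists_value_gt_right {f : ℝ → ℝ} (hsmooth : ContDiff ℝ (⊤ : ℕ∞) f) {q b : ℝ}
    (h0 : deriv f q = 0) (h2 : 0 < deriv (deriv f) q) (hqb : q < b) :
    ∃ x ∈ Ioo q b, f q < f x := by
  have hs : ContDiff ℝ (⊤ : ℕ∞) f := hsmooth.of_le (by simp)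
  have hd1 : ContDiff ℝ (⊤ : ℕ∞) (deriv f) := (contDiff_infty_iff_deriv.mp hs).2
  have hD : HasDerivAt (deriv f) (deriv (deriv f) q) q :=
    ((hd1.differentiable (by simp)) q).hasDerivAt
  have hev := ev_pos_right hD h0 h2
  obtain ⟨u, hu, hsub⟩ := mem_nhdsGT_iff_exists_Ioo_subset.mp hev
  set c := min u b with hc
  have hqc : q < c := lt_min hu hqb
  set m := (q + c) / 2 with hm
  have hqm : q < m := by simp only [hm]; linarith
  have hmc : m < c := by simp only [hm]; linarith
  have hmono : StrictMonoOn f (Icc q m) := by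
    apply strictMonoOn_of_deriv_pos (convex_Icc q m) (hs.continuous.continuousOn)
    intro x hx
    rw [interior_Icc] at hx
    exact hsub ⟨hx.1, hx.2.trans (hmc.trans_le (min_le_left _ _))⟩
  refine ⟨m, ⟨hqm, hmc.trans_le (min_le_right _ _)⟩, ?_⟩
  exact hmono (left_mem_Icc.2 hqm.le) (right_mem_Icc.2 hqm.le) hqm

lemma bdd_of_ordConnected_volume {C : Set ℝ} (hC : C.OrdConnected)
    (h : volume C ≠ ⊤) : BddBelow C ∧ BddAbove C := by
  rcases C.eq_empty_or_nonempty with rfl | ⟨x₀, hx₀⟩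
  · exact ⟨bddBelow_empty, bddAbove_empty⟩
  have key : ∀ y ∈ C, ENNReal.ofReal (|y - x₀|) ≤ volume C := by
    intro y hy
    rcases le_total y x₀ with hle | hle
    · have hsub : Icc y x₀ ⊆ C := hC.out hy hx₀
      calc ENNReal.ofReal (|y - x₀|) = volume (Icc y x₀) := by
            rw [Real.volume_Icc, abs_sub_comm, abs_of_nonneg (by linarith)]
      _ ≤ volume C := measure_mono hsub
    · have hsub : Icc x₀ y ⊆ C := hC.out hx₀ hy
      calc ENNReal.ofReal (|y - x₀|) = volume (Icc x₀ y) := by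
            rw [Real.volume_Icc, abs_of_nonneg (by linarith)]
      _ ≤ volume C := measure_mono hsub
  have habs : ∀ y ∈ C, |y - x₀| ≤ (volume C).toReal := by
    intro y hy
    have := key y hy
    exact (ENNReal.ofReal_le_iff_le_toReal h).mp this
  constructor
  · refine ⟨x₀ - (volume C).toReal, fun y hy => ?_⟩
    have := (abs_le.mp (habs y hy)).1; linarith
  · refine ⟨x₀ + (volume C).toReal, fun y hy => ?_⟩
    have := (abs_le.mp (habs y hy)).2; linarith

lemma exists_max_mem_component {f : ℝ → ℝ} (hsmooth : ContDiff ℝ (⊤ : ℕ∞) f)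
    (hnondeg : ∀ x, deriv f x = 0 → deriv (deriv f) x ≠ 0)
    {α : ℝ} (hEvol : volume {t : ℝ | α < f t} ≠ ⊤)
    {x : ℝ} (hx : x ∈ {t : ℝ | α < f t}) :
    ∃ q ∈ Set.ordConnectedComponent {t : ℝ | α < f t} x,
      deriv f q = 0 ∧ deriv (deriv f) q < 0 := by
  set E := {t : ℝ | α < f t} with hE
  have hopen : IsOpen E := isOpen_lt continuous_const hsmooth.continuous
  set C := Set.ordConnectedComponent E x with hCdef
  have hCC : C.OrdConnected := by rw [hCdef]; infer_instance
  have hxC : x ∈ C := Set.self_mem_ordConnectedComponent.2 hx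
  have hCsub : C ⊆ E := Set.ordConnectedComponent_subset
  have hCvol : volume C ≠ ⊤ := fun ht => hEvol (top_le_iff.mp (ht ▸ measure_mono hCsub))
  obtain ⟨hbb, hba⟩ := bdd_of_ordConnected_volume hCC hCvol
  set a := sInf C with ha
  set b := sSup C with hb
  have hne : C.Nonempty := ⟨x, hxC⟩
  have hsub : C ⊆ Icc a b := fun y hy => ⟨csInf_le hbb hy, le_csSup hba hy⟩
  have hIoo : Ioo a b ⊆ C := by
    intro t ht
    obtain ⟨u, huC, hu⟩ := exists_lt_of_csInf_lt hne ht.1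
    obtain ⟨v, hvC, hv⟩ := exists_lt_of_lt_csSup hne ht.2
    exact hCC.out huC hvC ⟨hu.le, hv.le⟩
  have haxb : a ≤ x ∧ x ≤ b := hsub hxC
  have haE : a ∉ E := by
    intro haE
    obtain ⟨δ, hδ, hball⟩ := Metric.isOpen_iff.mp hopen a haE
    have hIccE : Icc (a - δ/2) x ⊆ E := by
      intro t ht
      rcases lt_or_ge a t with hat | hta
      · rcases eq_or_lt_of_le (ht.2.trans haxb.2) with htb | htb
        · have : t = x := le_antisymm ht.2 (htb ▸ haxb.2)
          exact this ▸ hx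
        · exact hCsub (hIoo ⟨hat, htb⟩)
      · apply hball
        rw [Metric.mem_ball, Real.dist_eq, abs_lt]
        constructor <;> linarith [ht.1]
    have : a - δ/2 ∈ C := by
      rw [hCdef, Set.mem_ordConnectedComponent,
        Set.uIcc_of_ge (by linarith [haxb.1] : a - δ/2 ≤ x)]
      exact hIccE
    linarith [csInf_le hbb this]
  have hbE : b ∉ E := by
    intro hbE
    obtain ⟨δ, hδ, hball⟩ := Metric.isOpen_iff.mp hopen b hbE
    have hIccE : Icc x (b + δ/2) ⊆ E := by
      intro t ht
      rcases lt_or_ge t b with htb | hbt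
      · rcases eq_or_lt_of_le (haxb.1.trans ht.1) with hat | hat
        · have htx : t = x := le_antisymm (hat ▸ haxb.1) ht.1
          exact htx ▸ hx
        · exact hCsub (hIoo ⟨hat, htb⟩)
      · apply hball
        rw [Metric.mem_ball, Real.dist_eq, abs_lt]
        constructor <;> linarith [ht.2]
    have : b + δ/2 ∈ C := by
      rw [hCdef, Set.mem_ordConnectedComponent,
        Set.uIcc_of_le (by linarith [haxb.2] : x ≤ b + δ/2)]
      exact hIccE
    linarith [le_csSup hba this]
  have hab : a < b := by
    rcases eq_or_lt_of_le (haxb.1.trans haxb.2) with he | h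
    · exfalso; apply haE; rw [he] at haxb ⊢
      have : x = b := le_antisymm haxb.2 haxb.1
      exact this ▸ hx
    · exact h
  obtain ⟨q, hqmem, hqmax⟩ := isCompact_Icc.exists_isMaxOn (nonempty_Icc.2 hab.le)
    (hsmooth.continuous.continuousOn)
  have hfq : α < f q := lt_of_lt_of_le hx (hqmax (hsub hxC))
  have hqa : q ≠ a := fun h => haE (h ▸ hfq)
  have hqb : q ≠ b := fun h => hbE (h ▸ hfq)
  have hqI : q ∈ Ioo a b := ⟨lt_of_le_of_ne hqmem.1 (Ne.symm hqa), lt_of_le_of_ne hqmem.2 hqb⟩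
  have hq0 : deriv f q = 0 :=
    (hqmax.isLocalMax (Icc_mem_nhds hqI.1 hqI.2)).deriv_eq_zero
  refine ⟨q, hIoo hqI, hq0, ?_⟩
  rcases lt_or_gt_of_ne (hnondeg q hq0) with hlt | hgt
  · exact hlt
  · exfalso
    obtain ⟨y, hy, hfy⟩ := exists_value_gt_right hsmooth hq0 hgt hqI.2
    exact absurd (hqmax ⟨hqI.1.le.trans hy.1.le, hy.2.le⟩) (not_le.2 hfy)

lemma norm_setIntegral_exp_le {C : Set ℝ} (hC : C.OrdConnected) (hvol : volume C ≠ ⊤)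
    {z : ℝ} (hz : 0 < z) :
    ‖∫ x in C, Complex.exp (-(↑x * ↑z) * Complex.I)‖ ≤ min (volume C).toReal (2 / z) := by
  rcases C.eq_empty_or_nonempty with rfl | hne
  · simp only [Measure.restrict_empty, integral_zero_measure, norm_zero]
    exact le_min ENNReal.toReal_nonneg (by positivity)
  obtain ⟨hbb, hba⟩ := bdd_of_ordConnected_volume hC hvol
  set a := sInf C with ha
  set b := sSup C with hb
  have hsub : C ⊆ Icc a b := fun y hy => ⟨csInf_le hbb hy, le_csSup hba hy⟩
  have hIoo : Ioo a b ⊆ C := by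
    intro t ht
    obtain ⟨u, huC, hu⟩ := exists_lt_of_csInf_lt hne ht.1
    obtain ⟨v, hvC, hv⟩ := exists_lt_of_lt_csSup hne ht.2
    exact hC.out huC hvC ⟨hu.le, hv.le⟩
  have hab : a ≤ b := by
    obtain ⟨y, hy⟩ := hne
    exact (hsub hy).1.trans (hsub hy).2
  have hvolC : volume C = ENNReal.ofReal (b - a) := by
    refine le_antisymm ?_ ?_
    · calc volume C ≤ volume (Icc a b) := measure_mono hsub
        _ = ENNReal.ofReal (b - a) := Real.volume_Icc
    · calc ENNReal.ofReal (b - a) = volume (Ioo a b) := Real.volume_Ioo.symm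
        _ ≤ volume C := measure_mono hIoo
  have hae : C =ᵐ[volume] Ioo a b := by
    rw [MeasureTheory.ae_eq_set]
    constructor
    · refine measure_mono_null ?_ (((Set.finite_singleton b).insert a).measure_zero volume)
      intro t ht
      obtain ⟨htC, htI⟩ := ht
      have := hsub htC
      simp only [Set.mem_Ioo, not_and_or, not_lt] at htI
      rcases htI with h1 | h2
      · exact Or.inl (le_antisymm h1 this.1)
      · exact Or.inr (le_antisymm this.2 h2)
    · have : Ioo a b \ C = ∅ := Set.diff_eq_empty.2 hIoo
      rw [this]; simp
  rw [setIntegral_congr_set hae]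
  refine le_min ?_ ?_
  · have hb1 : ‖∫ x in Ioo a b, Complex.exp (-(↑x * ↑z) * Complex.I)‖
        ≤ 1 * (volume (Ioo a b)).toReal := by
      apply norm_setIntegral_le_of_norm_le_const
      · rw [Real.volume_Ioo]; exact ENNReal.ofReal_lt_top
      · intro x _
        rw [Complex.norm_exp]
        simp
    rw [one_mul] at hb1
    apply hb1.trans
    rw [hvolC, Real.volume_Ioo]
  have heq : (∫ x in Ioo a b, Complex.exp (-(↑x * ↑z) * Complex.I))
      = ∫ x in a..b, Complex.exp ((-↑z * Complex.I) * ↑x) := by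
    rw [intervalIntegral.integral_of_le hab, ← MeasureTheory.integral_Ioc_eq_integral_Ioo]
    congr 1
    ext x
    congr 1
    ring
  rw [heq]
  have hc : (-(z:ℂ) * Complex.I) ≠ 0 := by
    simp [Complex.ext_iff, hz.ne']
  rw [integral_exp_mul_complex hc]
  rw [norm_div]
  have h1 : ‖Complex.exp (-↑z * Complex.I * ↑b)‖ = 1 := by
    rw [Complex.norm_exp]
    simp
  have h2 : ‖Complex.exp (-↑z * Complex.I * ↑a)‖ = 1 := by
    rw [Complex.norm_exp]
    simp
  have h3 : ‖(-(z:ℂ) * Complex.I)‖ = z := by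
    simp [abs_of_pos hz]
  rw [h3]
  have hsum : ‖Complex.exp (-↑z * Complex.I * ↑b) - Complex.exp (-↑z * Complex.I * ↑a)‖ ≤ 2 :=
    (norm_sub_le _ _).trans (by rw [h1, h2]; norm_num)
  gcongr

lemma norm_integral_E_le {f : ℝ → ℝ} (hf : Integrable f)
    (hsmooth : ContDiff ℝ (⊤ : ℕ∞) f)
    (hnondeg : ∀ x, deriv f x = 0 → deriv (deriv f) x ≠ 0)
    {z : ℝ} (hz : 0 < z) {α : ℝ} (hα : 0 < α) (Mx : Finset ℝ)
    (hMx : ∀ q : ℝ, deriv f q = 0 → deriv (deriv f) q < 0 → q ∈ Mx) :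
    ‖∫ x in {t : ℝ | α < f t}, Complex.exp (-(↑x * ↑z) * Complex.I)‖ ≤
      (Mx.card : ℝ) * min (volume {t : ℝ | α < f t}).toReal (2 / z) := by
  classical
  set E := {t : ℝ | α < f t} with hE
  have hopen : IsOpen E := isOpen_lt continuous_const hsmooth.continuous
  have hEvol : volume E ≠ ⊤ := (Integrable.measure_gt_lt_top hf hα).ne
  set 𝒞 : Finset (Set ℝ) :=
    (Mx.filter (fun q => q ∈ E)).image (fun q => Set.ordConnectedComponent E q) with h𝒞
  have hcomp : ∀ C ∈ 𝒞, ∃ q ∈ E, C = Set.ordConnectedComponent E q := by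
    intro C hC
    obtain ⟨q, hq, rfl⟩ := Finset.mem_image.mp hC
    exact ⟨q, (Finset.mem_filter.mp hq).2, rfl⟩
  have hunion : E = ⋃ C ∈ 𝒞, C := by
    apply Set.Subset.antisymm
    · intro x hx
      obtain ⟨q, hqC, hq0, hq2⟩ := exists_max_mem_component hsmooth hnondeg hEvol hx
      have hqE : q ∈ E := Set.ordConnectedComponent_subset hqC
      have hCeq : Set.ordConnectedComponent E x = Set.ordConnectedComponent E q :=
        Set.ordConnectedComponent_eq (Set.mem_ordConnectedComponent.mp hqC)
      have hx' : x ∈ Set.ordConnectedComponent E q :=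
        hCeq ▸ Set.self_mem_ordConnectedComponent.2 hx
      refine Set.mem_biUnion ?_ hx'
      exact Finset.mem_image.mpr ⟨q, Finset.mem_filter.mpr ⟨hMx q hq0 hq2, hqE⟩, rfl⟩
    · intro x hx
      obtain ⟨C, hC, hxC⟩ := Set.mem_iUnion₂.mp hx
      obtain ⟨q, _, rfl⟩ := hcomp C hC
      exact Set.ordConnectedComponent_subset hxC
  have hmeas : ∀ C ∈ 𝒞, MeasurableSet C := by
    intro C hC
    obtain ⟨q, _, rfl⟩ := hcomp C hC
    exact Set.OrdConnected.measurableSet inferInstance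
  have hdisj : Set.Pairwise (↑𝒞 : Set (Set ℝ)) (Function.onFun Disjoint id) := by
    intro C1 h1 C2 h2 hne
    obtain ⟨p, _, rfl⟩ := hcomp C1 (Finset.mem_coe.mp h1)
    obtain ⟨q, _, rfl⟩ := hcomp C2 (Finset.mem_coe.mp h2)
    rw [Function.onFun, Set.disjoint_left]
    intro y hy1 hy2
    apply hne
    have e1 : Set.ordConnectedComponent E p = Set.ordConnectedComponent E y :=
      Set.ordConnectedComponent_eq (Set.mem_ordConnectedComponent.mp hy1)
    have e2 : Set.ordConnectedComponent E q = Set.ordConnectedComponent E y :=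
      Set.ordConnectedComponent_eq (Set.mem_ordConnectedComponent.mp hy2)
    rw [e1, e2]
  have hint : ∀ C ∈ 𝒞, IntegrableOn (fun x : ℝ => Complex.exp (-(↑x * ↑z) * Complex.I)) C := by
    intro C hC
    have hCE : C ⊆ E := by
      obtain ⟨q, _, rfl⟩ := hcomp C hC
      exact Set.ordConnectedComponent_subset
    apply IntegrableOn.mono_set ?_ hCE
    apply Measure.integrableOn_of_bounded (M := 1) hEvol
      ((Continuous.aestronglyMeasurable (by fun_prop)))
    filter_upwards with x
    apply le_of_eq
    rw [Complex.norm_exp]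
    simp
  have hsplit : (∫ x in E, Complex.exp (-(↑x * ↑z) * Complex.I))
      = ∑ C ∈ 𝒞, ∫ x in C, Complex.exp (-(↑x * ↑z) * Complex.I) := by
    rw [hunion]
    exact integral_biUnion_finset 𝒞 hmeas hdisj hint
  rw [hsplit]
  calc ‖∑ C ∈ 𝒞, ∫ x in C, Complex.exp (-(↑x * ↑z) * Complex.I)‖
      ≤ ∑ C ∈ 𝒞, ‖∫ x in C, Complex.exp (-(↑x * ↑z) * Complex.I)‖ := norm_sum_le _ _
    _ ≤ ∑ _C ∈ 𝒞, min (volume E).toReal (2 / z) := by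
        apply Finset.sum_le_sum
        intro C hC
        obtain ⟨q, _, hCq⟩ := hcomp C hC
        have hCE : C ⊆ E := hCq ▸ Set.ordConnectedComponent_subset
        have hCvol : volume C ≠ ⊤ := fun ht => hEvol (top_le_iff.mp (ht ▸ measure_mono hCE))
        have := norm_setIntegral_exp_le (hCq ▸ (inferInstance : Set.OrdConnected _)) hCvol hz
        apply this.trans
        apply min_le_min ?_ le_rfl
        exact ENNReal.toReal_mono hEvol (measure_mono hCE)
    _ = (𝒞.card : ℝ) * min (volume E).toReal (2 / z) := by
        rw [Finset.sum_const, nsmul_eq_mul]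
    _ ≤ (Mx.card : ℝ) * min (volume E).toReal (2 / z) := by
        apply mul_le_mul_of_nonneg_right
        · exact_mod_cast (Finset.card_image_le.trans (Finset.card_filter_le _ _))
        · exact le_min ENNReal.toReal_nonneg (by positivity)

lemma fourier_layer_cake {f : ℝ → ℝ} (hf : Integrable f) (hpos : ∀ x, 0 ≤ f x)
    (hcont : Continuous f) (z : ℝ) :
    Integrable (fun α : ℝ => ∫ x in {t : ℝ | α < f t}, Complex.exp (-(↑x * ↑z) * Complex.I))
      (volume.restrict (Set.Ioi (0:ℝ))) ∧
    (∫ x : ℝ, (f x : ℂ) * Complex.exp (-(↑x * ↑z) * Complex.I))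
      = ∫ α in Set.Ioi (0:ℝ), ∫ x in {t : ℝ | α < f t},
          Complex.exp (-(↑x * ↑z) * Complex.I) := by
  classical
  set ν := volume.restrict (Set.Ioi (0:ℝ)) with hν
  set S : Set (ℝ × ℝ) := {p : ℝ × ℝ | p.2 < f p.1} with hS
  have hSmeas : MeasurableSet S :=
    measurableSet_lt measurable_snd (hcont.measurable.comp measurable_fst)
  set g : ℝ × ℝ → ℂ := fun p => Complex.exp (-(↑p.1 * ↑z) * Complex.I) with hg
  have hgcont : Continuous g := by fun_prop
  set F : ℝ × ℝ → ℂ := S.indicator g with hF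
  have hFaesm : AEStronglyMeasurable F (volume.prod ν) :=
    (hgcont.stronglyMeasurable.indicator hSmeas).aestronglyMeasurable
  have hnormg : ∀ p : ℝ × ℝ, ‖g p‖ = 1 := by
    intro p
    rw [hg, Complex.norm_exp]
    simp
  have hslice : ∀ x : ℝ, ν {α : ℝ | (x, α) ∈ S} = ENNReal.ofReal (f x) := by
    intro x
    have : {α : ℝ | (x, α) ∈ S} = Set.Iio (f x) := rfl
    rw [this, hν, Measure.restrict_apply measurableSet_Iio, Set.inter_comm,
      Set.Ioi_inter_Iio, Real.volume_Ioo, sub_zero]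
  have hFint : Integrable F (volume.prod ν) := by
    refine ⟨hFaesm, ?_⟩
    rw [hasFiniteIntegral_def]
    have hb : ∀ p : ℝ × ℝ, (‖F p‖₊ : ENNReal) = S.indicator (fun _ => (1:ENNReal)) p := by
      intro p
      rw [hF]
      by_cases hp : p ∈ S
      · simp [Set.indicator_of_mem hp, show ‖g p‖₊ = 1 from NNReal.eq (by simpa using hnormg p)]
      · simp [Set.indicator_of_notMem hp]
    calc ∫⁻ p, (‖F p‖₊ : ENNReal) ∂(volume.prod ν)
        = ∫⁻ p, S.indicator (fun _ => (1:ENNReal)) p ∂(volume.prod ν) := by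
          exact lintegral_congr hb
      _ = (volume.prod ν) S := by rw [lintegral_indicator hSmeas]; simp
      _ = ∫⁻ x, ν {α : ℝ | (x, α) ∈ S} ∂volume := Measure.prod_apply hSmeas
      _ = ∫⁻ x, ENNReal.ofReal (f x) ∂volume := by
          exact lintegral_congr hslice
      _ < ⊤ := by
          have := hf.hasFiniteIntegral
          rw [hasFiniteIntegral_def] at this
          refine lt_of_le_of_lt (lintegral_mono fun x => ?_) this
          rw [← ofReal_norm, Real.norm_eq_abs, abs_of_nonneg (hpos x)]
  have huncurry : Function.uncurry (fun x α => F (x, α)) = F := by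
    ext p; cases p; rfl
  have hFint' : Integrable (Function.uncurry (fun x α => F (x, α))) (volume.prod ν) := by
    rw [huncurry]; exact hFint
  have hswap := integral_integral_swap hFint'
  have hLHS : (∫ x : ℝ, ∫ α : ℝ, F (x, α) ∂ν ∂volume)
      = ∫ x : ℝ, (f x : ℂ) * Complex.exp (-(↑x * ↑z) * Complex.I) := by
    apply integral_congr_ae
    filter_upwards with x
    have hind : (fun α : ℝ => F (x, α))
        = (Set.Iio (f x)).indicator (fun _ => Complex.exp (-(↑x * ↑z) * Complex.I)) := by
      ext α
      by_cases hα : α < f x <;>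
        simp [hF, hg, Set.indicator_apply, hS, Set.mem_setOf_eq, hα, neg_mul, mul_assoc]
    rw [hind, integral_indicator measurableSet_Iio, hν,
      Measure.restrict_restrict measurableSet_Iio, Set.inter_comm, Set.Ioi_inter_Iio,
      setIntegral_const, measureReal_def, Real.volume_Ioo, sub_zero, ENNReal.toReal_ofReal (hpos x),
      Complex.real_smul]
  have hRHS : (∫ α : ℝ, ∫ x : ℝ, F (x, α) ∂volume ∂ν)
      = ∫ α in Set.Ioi (0:ℝ), ∫ x in {t : ℝ | α < f t},
          Complex.exp (-(↑x * ↑z) * Complex.I) := by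
    rw [hν]
    apply integral_congr_ae
    filter_upwards with α
    have hind : (fun x : ℝ => F (x, α))
        = Set.indicator {t : ℝ | α < f t} (fun x => Complex.exp (-(↑x * ↑z) * Complex.I)) := by
      ext x
      by_cases hx : α < f x <;>
        simp [hF, hg, Set.indicator_apply, hS, Set.mem_setOf_eq, hx, neg_mul, mul_assoc]
    rw [hind, integral_indicator]
    exact (isOpen_lt continuous_const hcont).measurableSet
  constructor
  · have := hFint'.integral_prod_right
    have hcongr : (fun α : ℝ => ∫ x : ℝ, F (x, α) ∂volume)
        = fun α : ℝ => ∫ x in {t : ℝ | α < f t}, Complex.exp (-(↑x * ↑z) * Complex.I) := by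
      funext α
      have hind : (fun x : ℝ => F (x, α))
          = Set.indicator {t : ℝ | α < f t}
              (fun x => Complex.exp (-(↑x * ↑z) * Complex.I)) := by
        ext x
        by_cases hx : α < f x <;>
          simp [hF, hg, Set.indicator_apply, hS, Set.mem_setOf_eq, hx, neg_mul, mul_assoc]
      rw [hind, integral_indicator]
      exact (isOpen_lt continuous_const hcont).measurableSet
    rw [← hcongr]
    exact this
  · rw [← hLHS, ← hRHS]
    exact hswap

lemma dR_nonneg (f : ℝ → ℝ) (x : ℝ) : 0 ≤ decreasingRearrangement f x :=
  Real.sInf_nonneg fun _ hβ => hβ.1.le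

lemma lintegral_min_le {f : ℝ → ℝ} (hf : Integrable f) (hpos : ∀ x, 0 ≤ f x) {s : ℝ}
    (hs : 0 < s) (hI : IntegrableOn (decreasingRearrangement f) (Set.Ioo 0 s)) :
    ∫⁻ α in Set.Ioi (0:ℝ), min (volume {t : ℝ | α < f t}) (ENNReal.ofReal s)
      ≤ ENNReal.ofReal (∫ x in Set.Ioo 0 s, decreasingRearrangement f x) := by
  classical
  set d : ℝ → ENNReal := fun α => volume {t : ℝ | α < f t} with hd
  have habs : ∀ β : ℝ, {t : ℝ | β < |f t|} = {t : ℝ | β < f t} := by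
    intro β; ext t; rw [Set.mem_setOf_eq, Set.mem_setOf_eq, abs_of_nonneg (hpos t)]
  have hd_anti : Antitone d := by
    intro β γ hβγ
    exact measure_mono fun t ht => lt_of_le_of_lt hβγ ht
  have hd_meas : Measurable d := hd_anti.measurable
  have hdfin : ∀ α : ℝ, 0 < α → d α ≠ ⊤ := fun α hα => (hf.measure_gt_lt_top hα).ne
  set c : ENNReal := ∫⁻ t, ENNReal.ofReal (f t) with hc
  have hcfin : c ≠ ⊤ := by
    have := hf.hasFiniteIntegral
    rw [hasFiniteIntegral_def] at this
    refine (lt_of_le_of_lt (lintegral_mono fun t => ?_) this).ne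
    rw [← ofReal_norm, Real.norm_eq_abs, abs_of_nonneg (hpos t)]
  have hSne : ∀ x : ℝ, 0 < x →
      {α : ℝ | 0 < α ∧ volume {t : ℝ | α < |f t|} ≤ ENNReal.ofReal x}.Nonempty := by
    intro x hx
    set β := max 1 (c.toReal / x) with hβ
    have hβpos : (0:ℝ) < β := lt_of_lt_of_le one_pos (le_max_left _ _)
    refine ⟨β, hβpos, ?_⟩
    rw [habs]
    have hsub : {t : ℝ | β < f t} ⊆ {t : ℝ | ENNReal.ofReal β ≤ ENNReal.ofReal (f t)} :=
      fun t ht => ENNReal.ofReal_le_ofReal (le_of_lt ht)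
    have hmarkov := mul_meas_ge_le_lintegral₀
      (μ := volume) (f := fun t => ENNReal.ofReal (f t))
      (ENNReal.measurable_ofReal.comp_aemeasurable hf.aemeasurable) (ENNReal.ofReal β)
    have h1 : volume {t : ℝ | β < f t} ≤ c / ENNReal.ofReal β := by
      rw [ENNReal.le_div_iff_mul_le (Or.inl (by simp [hβpos])) (Or.inl ENNReal.ofReal_ne_top)]
      calc volume {t : ℝ | β < f t} * ENNReal.ofReal β
          = ENNReal.ofReal β * volume {t : ℝ | β < f t} := mul_comm _ _
        _ ≤ ENNReal.ofReal β * volume {t : ℝ | ENNReal.ofReal β ≤ ENNReal.ofReal (f t)} :=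
            mul_le_mul_right (measure_mono hsub) _
        _ ≤ c := hmarkov
    refine h1.trans ?_
    rw [← ENNReal.ofReal_toReal hcfin, ← ENNReal.ofReal_div_of_pos hβpos]
    apply ENNReal.ofReal_le_ofReal
    rcases le_or_gt c.toReal 0 with hc0 | hc0
    · have hczero : c.toReal = 0 := le_antisymm hc0 ENNReal.toReal_nonneg
      simp [hczero, hx.le]
    · rw [div_le_iff₀ hβpos]
      calc c.toReal = x * (c.toReal / x) := by field_simp
        _ ≤ x * β := by
            apply mul_le_mul_of_nonneg_left (le_max_right _ _) hx.le
  have hlow : ∀ x : ℝ, 0 < x →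
      volume ({α : ℝ | ENNReal.ofReal x < d α} ∩ Set.Ioi 0)
        ≤ ENNReal.ofReal (decreasingRearrangement f x) := by
    intro x hx
    have hsub : {α : ℝ | ENNReal.ofReal x < d α} ∩ Set.Ioi 0
        ⊆ Set.Ioc 0 (decreasingRearrangement f x) := by
      rintro α ⟨hα1, hα2⟩
      refine ⟨hα2, ?_⟩
      apply le_csInf (hSne x hx)
      intro β hβ
      obtain ⟨hβ1, hβ2⟩ := hβ
      rw [habs] at hβ2
      by_contra hlt
      push_neg at hlt
      have hdd : d α ≤ d β := hd_anti hlt.le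
      exact absurd (hdd.trans hβ2) (not_le.2 hα1)
    calc volume ({α : ℝ | ENNReal.ofReal x < d α} ∩ Set.Ioi 0)
        ≤ volume (Set.Ioc 0 (decreasingRearrangement f x)) := measure_mono hsub
      _ = ENNReal.ofReal (decreasingRearrangement f x) := by rw [Real.volume_Ioc, sub_zero]
  set W : Set (ℝ × ℝ) := {p : ℝ × ℝ | ENNReal.ofReal p.2 < d p.1} with hW
  have hWmeas : MeasurableSet W :=
    measurableSet_lt (ENNReal.measurable_ofReal.comp measurable_snd)
      (hd_meas.comp measurable_fst)
  have hswap := lintegral_lintegral_swap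
    (μ := volume.restrict (Set.Ioi (0:ℝ))) (ν := volume.restrict (Set.Ioo (0:ℝ) s))
    (f := fun α x => W.indicator (fun _ => (1:ENNReal)) (α, x))
    ((measurable_one.indicator hWmeas).comp
      (measurable_fst.prodMk measurable_snd)).aemeasurable
  have hleft : ∀ α : ℝ, 0 < α →
      (∫⁻ x in Set.Ioo 0 s, W.indicator (fun _ => (1:ENNReal)) (α, x))
        = min (d α) (ENNReal.ofReal s) := by
    intro α hα
    have hfin := hdfin α hα
    set m := min s (d α).toReal with hm
    have hm0 : 0 ≤ m := le_min hs.le ENNReal.toReal_nonneg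
    have hcong : ∀ x ∈ Set.Ioo (0:ℝ) s,
        W.indicator (fun _ => (1:ENNReal)) (α, x)
          = (Set.Ioo (0:ℝ) m).indicator (fun _ => (1:ENNReal)) x := by
      intro x hx
      by_cases hxd : ENNReal.ofReal x < d α
      · have h1 : (α, x) ∈ W := hxd
        have h2 : x ∈ Set.Ioo (0:ℝ) m :=
          ⟨hx.1, lt_min hx.2 ((ENNReal.ofReal_lt_iff_lt_toReal hx.1.le hfin).mp hxd)⟩
        simp only [Set.indicator_apply]
        rw [if_pos h1, if_pos h2]
      · have h1 : (α, x) ∉ W := hxd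
        have h2 : x ∉ Set.Ioo (0:ℝ) m := fun hxm =>
          hxd ((ENNReal.ofReal_lt_iff_lt_toReal hx.1.le hfin).mpr
            (lt_of_lt_of_le hxm.2 (min_le_right _ _)))
        simp only [Set.indicator_apply]
        rw [if_neg h1, if_neg h2]
    rw [setLIntegral_congr_fun measurableSet_Ioo hcong]
    rw [lintegral_indicator measurableSet_Ioo, Measure.restrict_restrict measurableSet_Ioo]
    have hinter : Set.Ioo (0:ℝ) m ∩ Set.Ioo (0:ℝ) s = Set.Ioo (0:ℝ) m := by
      apply Set.inter_eq_left.mpr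
      exact Set.Ioo_subset_Ioo le_rfl (min_le_left _ _)
    rw [hinter]
    simp only [lintegral_one, Measure.restrict_apply MeasurableSet.univ, Set.univ_inter]
    rw [Real.volume_Ioo, sub_zero]
    rcases le_total s (d α).toReal with hle | hle
    · rw [hm, min_eq_left hle, min_eq_right]
      exact (ENNReal.ofReal_le_of_le_toReal hle : ENNReal.ofReal s ≤ d α)
    · rw [hm, min_eq_right hle, min_eq_left, ENNReal.ofReal_toReal hfin]
      rw [← ENNReal.ofReal_toReal hfin]
      exact ENNReal.ofReal_le_ofReal hle
  have hright : ∀ x : ℝ,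
      (∫⁻ α in Set.Ioi (0:ℝ), W.indicator (fun _ => (1:ENNReal)) (α, x))
        = volume ({α : ℝ | ENNReal.ofReal x < d α} ∩ Set.Ioi 0) := by
    intro x
    have hcong : (fun α : ℝ => W.indicator (fun _ => (1:ENNReal)) (α, x))
        = {α : ℝ | ENNReal.ofReal x < d α}.indicator (fun _ => (1:ENNReal)) := by
      funext α
      by_cases hα : ENNReal.ofReal x < d α
      · have h1 : (α, x) ∈ W := hα
        have h2 : α ∈ {α : ℝ | ENNReal.ofReal x < d α} := hα
        simp only [Set.indicator_apply]
        rw [if_pos h1, if_pos h2]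
      · have h1 : (α, x) ∉ W := hα
        have h2 : α ∉ {α : ℝ | ENNReal.ofReal x < d α} := hα
        simp only [Set.indicator_apply]
        rw [if_neg h1, if_neg h2]
    rw [hcong, lintegral_indicator, Measure.restrict_restrict]
    · simp only [lintegral_one, Measure.restrict_apply MeasurableSet.univ, Set.univ_inter]
    · exact measurableSet_lt (measurable_const) hd_meas
    · exact measurableSet_lt (measurable_const) hd_meas
  calc ∫⁻ α in Set.Ioi (0:ℝ), min (d α) (ENNReal.ofReal s)
      = ∫⁻ α in Set.Ioi (0:ℝ), ∫⁻ x in Set.Ioo 0 s,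
          W.indicator (fun _ => (1:ENNReal)) (α, x) := by
        apply lintegral_congr_ae
        filter_upwards [self_mem_ae_restrict measurableSet_Ioi] with α hα
        exact (hleft α hα).symm
    _ = ∫⁻ x in Set.Ioo 0 s, ∫⁻ α in Set.Ioi (0:ℝ),
          W.indicator (fun _ => (1:ENNReal)) (α, x) := hswap
    _ ≤ ∫⁻ x in Set.Ioo 0 s, ENNReal.ofReal (decreasingRearrangement f x) := by
        apply lintegral_mono_ae
        filter_upwards [self_mem_ae_restrict measurableSet_Ioo] with x hx
        rw [hright x]
        exact hlow x hx.1
    _ = ENNReal.ofReal (∫ x in Set.Ioo 0 s, decreasingRearrangement f x) := by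
        rw [ofReal_integral_eq_lintegral_ofReal hI
          (Filter.Eventually.of_forall fun x => dR_nonneg f x)]

end AuxLemmas

/-- Application 1: if `f ∈ L¹` is nonnegative, smooth, with `f'(x) = 0 → f''(x) ≠ 0`,
and `Q(z) > N` for some `z > 0`, then `f'` has at least `2N - 1` real roots. -/
theorem deriv_roots_of_Q_gt (f : ℝ → ℝ) (hf : Integrable f)
    (hpos : ∀ x, 0 ≤ f x) (hsmooth : ContDiff ℝ (⊤ : ℕ∞) f)
    (hnondeg : ∀ x : ℝ, deriv f x = 0 → deriv (deriv f) x ≠ 0)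
    (N : ℕ) (hN : 0 < N)
    (h : ∃ z : ℝ, 0 < z ∧
      ‖fourierTransform f z‖ /
        (π * Real.sqrt 10 * ∫ x in (0:ℝ)..(1/z), decreasingRearrangement f x) > N) :
    ∃ S : Finset ℝ, 2 * N - 1 ≤ S.card ∧ ∀ x ∈ S, deriv f x = 0 := by
  classical
  by_cases hZinf : {x : ℝ | deriv f x = 0}.Infinite
  · obtain ⟨S, hSsub, hScard⟩ := hZinf.exists_subset_card_eq (2*N-1)
    exact ⟨S, hScard.ge, fun x hx => hSsub hx⟩
  rw [Set.not_infinite] at hZinf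
  by_contra hcon
  -- bound on the number of zeros
  have hk : hZinf.toFinset.card < 2*N-1 := by
    by_contra hge
    push_neg at hge
    exact hcon ⟨hZinf.toFinset, hge, fun x hx => hZinf.mem_toFinset.mp hx⟩
  obtain ⟨z, hz, hQ⟩ := h
  set s : ℝ := 1/z with hsdef
  have hs : 0 < s := by positivity
  set I : ℝ := ∫ x in (0:ℝ)..s, decreasingRearrangement f x with hIdef
  set A : ℝ := ‖fourierTransform f z‖ with hAdef
  have hA0 : 0 ≤ A := norm_nonneg _
  set D : ℝ := π * Real.sqrt 10 * I with hDdef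
  have hπ : (9:ℝ) < π * Real.sqrt 10 := by
    have h1 : (3:ℝ) < π := Real.pi_gt_three
    have h2 : (3:ℝ) < Real.sqrt 10 := by
      rw [show (3:ℝ) = Real.sqrt 9 by rw [show (9:ℝ) = 3^2 by norm_num, Real.sqrt_sq]; norm_num]
      exact Real.sqrt_lt_sqrt (by norm_num) (by norm_num)
    nlinarith
  have hD : 0 < D := by
    by_contra hDle
    push_neg at hDle
    have hle : A / D ≤ 0 := div_nonpos_of_nonneg_of_nonpos hA0 hDle
    have hN1 : (1:ℝ) ≤ N := by exact_mod_cast hN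
    have hgt := hQ
    linarith
  have hAD : (N:ℝ) * D < A := (lt_div_iff₀ hD).mp hQ
  have hIpos : 0 < I := by
    by_contra hIle
    push_neg at hIle
    have : D ≤ 0 := by
      rw [hDdef]
      apply mul_nonpos_of_nonneg_of_nonpos ?_ hIle
      positivity
    linarith
  -- integrability of the rearrangement
  have hii : IntervalIntegrable (decreasingRearrangement f) volume 0 s := by
    by_contra hni
    have hI0 : I = 0 := by rw [hIdef]; exact intervalIntegral.integral_undef hni
    linarith
  have hIoo_int : IntegrableOn (decreasingRearrangement f) (Set.Ioo 0 s) := by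
    have := (intervalIntegrable_iff_integrableOn_Ioc_of_le hs.le).mp hii
    exact this.mono_set Set.Ioo_subset_Ioc_self
  have hIeq : I = ∫ x in Set.Ioo 0 s, decreasingRearrangement f x := by
    rw [hIdef, intervalIntegral.integral_of_le hs.le, MeasureTheory.integral_Ioc_eq_integral_Ioo]
  -- maxima finset
  set Mx : Finset ℝ := hZinf.toFinset.filter (fun x => deriv (deriv f) x < 0) with hMxdef
  have hMx : ∀ q : ℝ, deriv f q = 0 → deriv (deriv f) q < 0 → q ∈ Mx := by
    intro q hq0 hq2
    rw [hMxdef, Finset.mem_filter]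
    exact ⟨(Set.Finite.mem_toFinset _).mpr hq0, hq2⟩
  have hMcard : Mx.card ≤ hZinf.toFinset.card := Finset.card_filter_le _ _
  -- layer cake
  obtain ⟨hGint, hfour⟩ := fourier_layer_cake hf hpos hsmooth.continuous z
  set G : ℝ → ℂ := fun α => ∫ x in {t : ℝ | α < f t}, Complex.exp (-(↑x * ↑z) * Complex.I)
    with hGdef
  have hAeq : A = ‖∫ α in Set.Ioi (0:ℝ), G α‖ := by
    rw [hAdef]
    unfold fourierTransform
    rw [hfour]
  -- pointwise bound
  set d : ℝ → ENNReal := fun α => volume {t : ℝ | α < f t} with hddef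
  have h2s : 2 / z = 2 * s := by rw [hsdef]; ring
  have hptR : ∀ α : ℝ, 0 < α →
      ‖G α‖ ≤ (Mx.card : ℝ) * (2 * min (d α).toReal s) := by
    intro α hα
    have hbound := norm_integral_E_le hf hsmooth hnondeg hz hα Mx hMx
    apply hbound.trans
    apply mul_le_mul_of_nonneg_left ?_ (Nat.cast_nonneg _)
    rw [h2s]
    have ha : 0 ≤ (d α).toReal := ENNReal.toReal_nonneg
    rcases le_total ((d α).toReal) s with hle | hle
    · calc min ((d α).toReal) (2*s) ≤ (d α).toReal := min_le_left _ _
        _ = min ((d α).toReal) s := (min_eq_left hle).symm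
        _ ≤ 2 * min ((d α).toReal) s := by
            have : 0 ≤ min ((d α).toReal) s := le_min ha hs.le
            linarith
    · calc min ((d α).toReal) (2*s) ≤ 2*s := min_le_right _ _
        _ = 2 * min ((d α).toReal) s := by rw [min_eq_right hle]
  have hdfin : ∀ α : ℝ, 0 < α → d α ≠ ⊤ := fun α hα => (hf.measure_gt_lt_top hα).ne
  have hconv : ∀ α : ℝ, 0 < α →
      ENNReal.ofReal (min (d α).toReal s) = min (d α) (ENNReal.ofReal s) := by
    intro α hα
    have hfin := hdfin α hα
    rcases le_total ((d α).toReal) s with hle | hle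
    · rw [min_eq_left hle, ENNReal.ofReal_toReal hfin, min_eq_left]
      rw [← ENNReal.ofReal_toReal hfin]
      exact ENNReal.ofReal_le_ofReal hle
    · rw [min_eq_right hle, min_eq_right]
      exact ENNReal.ofReal_le_of_le_toReal hle
  -- main chain in ℝ≥0∞
  set B : ENNReal := ENNReal.ofReal ((Mx.card : ℝ) * 2) *
    ENNReal.ofReal (∫ x in Set.Ioo 0 s, decreasingRearrangement f x) with hBdef
  have hBne : B ≠ ⊤ := by
    rw [hBdef]
    exact ENNReal.mul_ne_top ENNReal.ofReal_ne_top ENNReal.ofReal_ne_top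
  have hlchain : (∫⁻ α in Set.Ioi (0:ℝ), ENNReal.ofReal ‖G α‖) ≤ B := by
    calc (∫⁻ α in Set.Ioi (0:ℝ), ENNReal.ofReal ‖G α‖)
        ≤ ∫⁻ α in Set.Ioi (0:ℝ),
            ENNReal.ofReal ((Mx.card : ℝ) * 2) * min (d α) (ENNReal.ofReal s) := by
          apply lintegral_mono_ae
          filter_upwards [self_mem_ae_restrict measurableSet_Ioi] with α hα
          calc ENNReal.ofReal ‖G α‖
              ≤ ENNReal.ofReal ((Mx.card : ℝ) * (2 * min (d α).toReal s)) :=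
                ENNReal.ofReal_le_ofReal (hptR α hα)
            _ = ENNReal.ofReal ((Mx.card : ℝ) * 2 * min (d α).toReal s) := by ring_nf
            _ = ENNReal.ofReal ((Mx.card : ℝ) * 2) * ENNReal.ofReal (min (d α).toReal s) := by
                rw [ENNReal.ofReal_mul (by positivity)]
            _ = ENNReal.ofReal ((Mx.card : ℝ) * 2) * min (d α) (ENNReal.ofReal s) := by
                rw [hconv α hα]
      _ = ENNReal.ofReal ((Mx.card : ℝ) * 2) *
            ∫⁻ α in Set.Ioi (0:ℝ), min (d α) (ENNReal.ofReal s) := by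
          rw [lintegral_const_mul' _ _ ENNReal.ofReal_ne_top]
      _ ≤ B := by
          rw [hBdef]
          exact mul_le_mul_right (lintegral_min_le hf hpos hs hIoo_int) _
  have hAB : A ≤ ((Mx.card : ℝ) * 2) * I := by
    have h1 : A ≤ ∫ α in Set.Ioi (0:ℝ), ‖G α‖ := by
      rw [hAeq]
      exact norm_integral_le_integral_norm _
    have h2 : (∫ α in Set.Ioi (0:ℝ), ‖G α‖)
        = (∫⁻ α in Set.Ioi (0:ℝ), ENNReal.ofReal ‖G α‖).toReal := by
      rw [integral_eq_lintegral_of_nonneg_ae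
        (Filter.Eventually.of_forall fun α => norm_nonneg _) hGint.aestronglyMeasurable.norm]
    have h3 : (∫⁻ α in Set.Ioi (0:ℝ), ENNReal.ofReal ‖G α‖).toReal ≤ B.toReal :=
      ENNReal.toReal_mono hBne hlchain
    have h4 : B.toReal = ((Mx.card : ℝ) * 2) * I := by
      rw [hBdef, ENNReal.toReal_mul, ENNReal.toReal_ofReal (by positivity),
        ENNReal.toReal_ofReal (by rw [← hIeq]; exact hIpos.le), ← hIeq]
    calc A ≤ ∫ α in Set.Ioi (0:ℝ), ‖G α‖ := h1
      _ = (∫⁻ α in Set.Ioi (0:ℝ), ENNReal.ofReal ‖G α‖).toReal := h2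
      _ ≤ B.toReal := h3
      _ = ((Mx.card : ℝ) * 2) * I := h4
  -- final arithmetic contradiction
  have hcard_nat : Mx.card * 2 + 4 ≤ 4 * N := by omega
  have hcard : (Mx.card : ℝ) * 2 ≤ 4 * (N:ℝ) - 4 := by
    have : ((Mx.card * 2 + 4 : ℕ) : ℝ) ≤ ((4 * N : ℕ) : ℝ) := by exact_mod_cast hcard_nat
    push_cast at this
    linarith
  have hN1 : (1:ℝ) ≤ N := by exact_mod_cast hN
  have hfinal : (N:ℝ) * D > ((Mx.card : ℝ) * 2) * I := by
    rw [hDdef]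
    have hstep1 : ((Mx.card : ℝ) * 2) * I ≤ (4 * (N:ℝ) - 4) * I :=
      mul_le_mul_of_nonneg_right hcard hIpos.le
    have hstep2 : (4 * (N:ℝ) - 4) * I < (N:ℝ) * (π * Real.sqrt 10 * I) := by
      have : (4 * (N:ℝ) - 4) < (N:ℝ) * (π * Real.sqrt 10) := by nlinarith
      calc (4 * (N:ℝ) - 4) * I < ((N:ℝ) * (π * Real.sqrt 10)) * I :=
            mul_lt_mul_of_pos_right this hIpos
        _ = (N:ℝ) * (π * Real.sqrt 10 * I) := by ring
    linarith
  linarith [hAD, hAB, hfinal]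
end
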